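/- arXiv:1808.10303 — 4 statements merged into one kernel-verified Lean document; each statement's English description precedes it below -/
import Mathlib

section
/- Let K be a field with char K ≠ 2 and let 𝔤 be a Lie algebra over K. Then the ideal L(𝔤) of χ(𝔤) generated by the elements x − x^ψ (x ∈ 𝔤) is in fact generated as a Lie subalgebra by the set {x − x^ψ : x ∈ 𝔤}; that is, the Lie subalgebra of χ(𝔤) generated by {x − x^ψ : x ∈ 𝔤} equals the kernel of the homomorphism α: χ(𝔤) → 𝔤 determined by α(x) = α(x^ψ) = x. -/
/- Formalization of a statement from "Weak commutativity for Lie algebras"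
   (arXiv:1808.10303). All Lie algebras are over a fixed field `K` with `char K ≠ 2`. -/

universe u v w

set_option linter.unusedVariables false

section WeakCommutativity

variable (K : Type u) [Field K] (g : Type v) [LieRing g] [LieAlgebra K g]

/-- The image of `x ∈ g` (first copy) in the free Lie algebra on two copies of `g`. -/
noncomputable def ofl (x : g) : FreeLieAlgebra K (g ⊕ g) := FreeLieAlgebra.of K (Sum.inl x)

/-- The image of `xᵠ ∈ gᵠ` (second copy) in the free Lie algebra on two copies of `g`. -/
noncomputable def ofr (x : g) : FreeLieAlgebra K (g ⊕ g) := FreeLieAlgebra.of K (Sum.inr x)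

/-- Relators presenting `χ(g)` as a quotient of the free Lie algebra on the disjoint union of
two copies of (the underlying type of) `g`: the relations presenting the free Lie product
(coproduct) of `g` and its copy `gᵠ`, together with the weak commutativity relations
`⁅x, xᵠ⁆ = 0` for all `x ∈ g`. -/
def chiRelators : Set (FreeLieAlgebra K (g ⊕ g)) :=
  { z | (∃ x y : g, z = ofl K g (x + y) - ofl K g x - ofl K g y)
      ∨ (∃ (c : K) (x : g), z = ofl K g (c • x) - c • ofl K g x)
      ∨ (∃ x y : g, z = ofl K g ⁅x, y⁆ - ⁅ofl K g x, ofl K g y⁆)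
      ∨ (∃ x y : g, z = ofr K g (x + y) - ofr K g x - ofr K g y)
      ∨ (∃ (c : K) (x : g), z = ofr K g (c • x) - c • ofr K g x)
      ∨ (∃ x y : g, z = ofr K g ⁅x, y⁆ - ⁅ofr K g x, ofr K g y⁆)
      ∨ (∃ x : g, z = ⁅ofl K g x, ofr K g x⁆) }

/-- The ideal of relations defining `χ(g)`. -/
noncomputable def chiIdeal : LieIdeal K (FreeLieAlgebra K (g ⊕ g)) :=
  LieSubmodule.lieSpan K (FreeLieAlgebra K (g ⊕ g)) (chiRelators K g)

/-- Sidki's weak commutativity Lie algebra `χ(g)`: the quotient of the free Lie product of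
two isomorphic copies `g`, `gᵠ` of `g` by the ideal generated by the brackets `⁅x, xᵠ⁆`. -/
abbrev chi : Type (max u v) := FreeLieAlgebra K (g ⊕ g) ⧸ chiIdeal K g

/-- The canonical image of `x ∈ g` (first copy) in `χ(g)`. -/
noncomputable def chiι (x : g) : chi K g :=
  LieSubmodule.Quotient.mk (N := chiIdeal K g) (ofl K g x)

/-- The canonical image of `xᵠ` (the second copy of `x ∈ g`) in `χ(g)`. -/
noncomputable def chiψ (x : g) : chi K g :=
  LieSubmodule.Quotient.mk (N := chiIdeal K g) (ofr K g x)

/-- The ideal `L(g) ⊆ χ(g)`, generated by the elements `x - xᵠ` for `x ∈ g`. -/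
noncomputable def chiL : LieIdeal K (chi K g) :=
  LieSubmodule.lieSpan K (chi K g) (Set.range fun x : g => chiι K g x - chiψ K g x)

end WeakCommutativity

/-
Write `S` for the Lie subalgebra generated by the elements `x - xᵠ`. Polarizing `⁅x, xᵠ⁆ = 0`
gives `⁅x, yᵠ⁆ = ⁅xᵠ, y⁆`, hence `⁅x + xᵠ, y - yᵠ⁆ = ⁅x, y⁆ - ⁅x, y⁆ᵠ`: the derivation
`ad (x + xᵠ)` maps the generators of `S` into `S`, so it preserves `S`. So does `ad (x - xᵠ)`,
and since `2` is invertible, so do `ad x` and `ad xᵠ`; these generate `χ(g)`, so `S` is an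
ideal. Modulo any ideal containing the `x - xᵠ`, every `z` agrees with `α z` in the first copy
(both sides are Lie homomorphisms in `z` agreeing on generators), so `ker α ⊆ S ⊆ L(g) ⊆ ker α`.
-/

namespace LieSubalgebra

variable {R L : Type*} [CommRing R] [LieRing L] [LieAlgebra R L]

theorem mem_normalizer_lieSpan {X : Set L} {a : L} (h : ∀ x ∈ X, ⁅a, x⁆ ∈ lieSpan R L X) :
    a ∈ (lieSpan R L X).normalizer := by
  rw [mem_normalizer_iff]
  intro y hy
  induction hy using lieSpan_induction with
  | mem x hx => exact h x hx
  | zero => simp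
  | add x y _ _ hx hy => simpa only [lie_add] using add_mem hx hy
  | smul t x _ hx => simpa only [lie_smul] using LieSubalgebra.smul_mem _ t hx
  | lie x y hx' hy' hx hy =>
    rw [leibniz_lie]
    exact add_mem (lie_mem _ hx hy') (lie_mem _ hx' hy)

theorem exists_lieIdeal_coe_eq_of_subset_normalizer {H : LieSubalgebra R L} {X : Set L}
    (hX : lieSpan R L X = ⊤) (hXH : X ⊆ H.normalizer) : ∃ I : LieIdeal R L, ↑I = H := by
  rw [exists_lieIdeal_coe_eq_iff]
  intro x y hy
  have hx : x ∈ H.normalizer := lieSpan_le.2 hXH (hX ▸ mem_top x)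
  exact (mem_normalizer_iff H x).1 hx y hy

theorem lieSpan_image_eq_top {L' : Type*} [LieRing L'] [LieAlgebra R L'] {f : L →ₗ⁅R⁆ L'}
    (hf : Function.Surjective f) {X : Set L} (hX : lieSpan R L X = ⊤) :
    lieSpan R L' (f '' X) = ⊤ := by
  rw [← map_lieSpan, hX, ← LieSubalgebra.map_top, f.range_eq_top.2 hf]

end LieSubalgebra

theorem FreeLieAlgebra.lieSpan_range_of (R X : Type*) [CommRing R] :
    LieSubalgebra.lieSpan R (FreeLieAlgebra R X) (Set.range (of R)) = ⊤ := by
  set S := LieSubalgebra.lieSpan R (FreeLieAlgebra R X) (Set.range (of R))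
  have hlift : S.incl.comp (lift R fun x ↦ ⟨of R x, LieSubalgebra.subset_lieSpan ⟨x, rfl⟩⟩)
      = LieHom.id := hom_ext fun x ↦ by simp
  refine eq_top_iff.2 fun w _ ↦ ?_
  rw [← LieHom.id_apply (R := R) w, ← hlift]
  exact Subtype.prop _

theorem LieHom.eqOn_lieSpan {R L L' : Type*} [CommRing R] [LieRing L] [LieAlgebra R L]
    [LieRing L'] [LieAlgebra R L'] {f₁ f₂ : L →ₗ⁅R⁆ L'} {X : Set L} (h : Set.EqOn f₁ f₂ X) :
    Set.EqOn f₁ f₂ (LieSubalgebra.lieSpan R L X) := by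
  intro _ hx
  induction hx using LieSubalgebra.lieSpan_induction with
  | mem x hx => exact h hx
  | zero => simp
  | add x y _ _ hx hy => simp [hx, hy]
  | smul t x _ hx => simp [hx]
  | lie x y _ _ hx hy => simp [hx, hy]

theorem mem_of_add_mem_of_sub_mem {K M : Type*} [DivisionRing K] [AddCommGroup M]
    [Module K M] {S : Type*} [SetLike S M] [AddSubgroupClass S M] [SMulMemClass S K M]
    {p : S} (h2 : (2 : K) ≠ 0) {a b : M} (hadd : a + b ∈ p) (hsub : a - b ∈ p) : a ∈ p := by
  have : a = (2⁻¹ : K) • ((a + b) + (a - b)) := by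
    rw [add_add_sub_cancel, ← two_smul K, smul_smul, inv_mul_cancel₀ h2, one_smul]
  rw [this]
  exact SMulMemClass.smul_mem _ (add_mem hadd hsub)

noncomputable def LieIdeal.mkHom {R L : Type*} [CommRing R] [LieRing L] [LieAlgebra R L]
    (I : LieIdeal R L) : L →ₗ⁅R⁆ L ⧸ I :=
  { (LieSubmodule.Quotient.mk' I : L →ₗ[R] L ⧸ I) with
    map_lie' := LieSubmodule.Quotient.mk_bracket I _ _ }

section Chi

variable {K : Type u} [Field K] {g : Type v} [LieRing g] [LieAlgebra K g]

theorem mkHom_eq_zero_of_mem_chiRelators {z : FreeLieAlgebra K (g ⊕ g)}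
    (hz : z ∈ chiRelators K g) : (chiIdeal K g).mkHom z = 0 :=
  LieSubmodule.Quotient.mk_eq_zero'.2 (LieSubmodule.subset_lieSpan hz)

theorem chiι_add (x y : g) : chiι K g (x + y) = chiι K g x + chiι K g y := by
  have := mkHom_eq_zero_of_mem_chiRelators (K := K) (Or.inl ⟨x, y, rfl⟩)
  rwa [map_sub, map_sub, sub_sub, sub_eq_zero] at this

theorem chiι_smul (c : K) (x : g) : chiι K g (c • x) = c • chiι K g x := by
  have := mkHom_eq_zero_of_mem_chiRelators (K := K) (Or.inr (Or.inl ⟨c, x, rfl⟩))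
  rwa [map_sub, map_smul, sub_eq_zero] at this

theorem chiι_lie (x y : g) : chiι K g ⁅x, y⁆ = ⁅chiι K g x, chiι K g y⁆ := by
  have := mkHom_eq_zero_of_mem_chiRelators (K := K) (Or.inr (Or.inr (Or.inl ⟨x, y, rfl⟩)))
  rwa [map_sub, LieHom.map_lie, sub_eq_zero] at this

theorem chiψ_add (x y : g) : chiψ K g (x + y) = chiψ K g x + chiψ K g y := by
  have := mkHom_eq_zero_of_mem_chiRelators (K := K)
    (Or.inr (Or.inr (Or.inr (Or.inl ⟨x, y, rfl⟩))))
  rwa [map_sub, map_sub, sub_sub, sub_eq_zero] at this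

theorem chiψ_lie (x y : g) : chiψ K g ⁅x, y⁆ = ⁅chiψ K g x, chiψ K g y⁆ := by
  have := mkHom_eq_zero_of_mem_chiRelators (K := K)
    (Or.inr (Or.inr (Or.inr (Or.inr (Or.inr (Or.inl ⟨x, y, rfl⟩))))))
  rwa [map_sub, LieHom.map_lie, sub_eq_zero] at this

theorem chiι_lie_chiψ_self (x : g) : ⁅chiι K g x, chiψ K g x⁆ = 0 := by
  have := mkHom_eq_zero_of_mem_chiRelators (K := K)
    (Or.inr (Or.inr (Or.inr (Or.inr (Or.inr (Or.inr ⟨x, rfl⟩))))))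
  rwa [LieHom.map_lie] at this

variable (K g) in
noncomputable def chiιHom : g →ₗ⁅K⁆ chi K g where
  toFun := chiι K g
  map_add' := chiι_add
  map_smul' := chiι_smul
  map_lie' := chiι_lie _ _

theorem chiι_lie_chiψ_comm (x y : g) :
    ⁅chiι K g x, chiψ K g y⁆ = ⁅chiψ K g x, chiι K g y⁆ := by
  have h := chiι_lie_chiψ_self (K := K) (x + y)
  rw [chiι_add, chiψ_add, add_lie, lie_add, lie_add, chiι_lie_chiψ_self, chiι_lie_chiψ_self,
    zero_add, add_zero] at h
  rw [← lie_skew (chiψ K g x), eq_neg_iff_add_eq_zero]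
  exact h

theorem lie_chiι_add_chiψ_chiι_sub_chiψ (x y : g) :
    ⁅chiι K g x + chiψ K g x, chiι K g y - chiψ K g y⁆ = chiι K g ⁅x, y⁆ - chiψ K g ⁅x, y⁆ := by
  rw [chiι_lie, chiψ_lie, add_lie, lie_sub, lie_sub, chiι_lie_chiψ_comm]
  abel

variable (K g) in
theorem chi_lieSpan_eq_top :
    LieSubalgebra.lieSpan K (chi K g) (Set.range (chiι K g) ∪ Set.range (chiψ K g)) = ⊤ := by
  have himage : (chiIdeal K g).mkHom '' Set.range (FreeLieAlgebra.of K) =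
      Set.range (chiι K g) ∪ Set.range (chiψ K g) := by
    rw [← Set.range_comp, ← Set.Sum.elim_range]
    congr 1
    funext x
    cases x <;> rfl
  rw [← himage]
  exact LieSubalgebra.lieSpan_image_eq_top (LieSubmodule.Quotient.surjective_mk' _)
    (FreeLieAlgebra.lieSpan_range_of K _)

theorem exists_lieIdeal_coe_eq_lieSpan_chiι_sub_chiψ (h2 : (2 : K) ≠ 0) :
    ∃ I : LieIdeal K (chi K g), ↑I = LieSubalgebra.lieSpan K (chi K g)
      (Set.range fun x : g => chiι K g x - chiψ K g x) := by
  set S := LieSubalgebra.lieSpan K (chi K g) (Set.range fun x : g => chiι K g x - chiψ K g x)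
  have hsub (x : g) : chiι K g x - chiψ K g x ∈ S.normalizer :=
    S.le_normalizer (LieSubalgebra.subset_lieSpan ⟨x, rfl⟩)
  have hadd (x : g) : chiι K g x + chiψ K g x ∈ S.normalizer := by
    refine LieSubalgebra.mem_normalizer_lieSpan ?_
    rintro _ ⟨y, rfl⟩
    rw [lie_chiι_add_chiψ_chiι_sub_chiψ]
    exact LieSubalgebra.subset_lieSpan ⟨_, rfl⟩
  refine LieSubalgebra.exists_lieIdeal_coe_eq_of_subset_normalizer (chi_lieSpan_eq_top K g) ?_
  rintro _ (⟨x, rfl⟩ | ⟨x, rfl⟩)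
  · exact mem_of_add_mem_of_sub_mem h2 (hadd x) (hsub x)
  · refine mem_of_add_mem_of_sub_mem h2 (b := chiι K g x) ?_ ?_
    · simpa only [add_comm] using hadd x
    · simpa only [neg_sub] using neg_mem (hsub x)

theorem ker_le_of_chiι_sub_chiψ_mem (α : chi K g →ₗ⁅K⁆ g) (hα : ∀ x : g, α (chiι K g x) = x)
    (hαψ : ∀ x : g, α (chiψ K g x) = x) {I : LieIdeal K (chi K g)}
    (hI : ∀ x : g, chiι K g x - chiψ K g x ∈ I) : α.ker ≤ I := by
  have hgen : Set.EqOn I.mkHom (I.mkHom.comp ((chiιHom K g).comp α))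
      (Set.range (chiι K g) ∪ Set.range (chiψ K g)) := by
    rintro _ (⟨x, rfl⟩ | ⟨x, rfl⟩)
    · simp [chiιHom, hα]
    · show I.mkHom (chiψ K g x) = I.mkHom (chiι K g (α (chiψ K g x)))
      rw [hαψ, eq_comm, ← sub_eq_zero, ← map_sub]
      exact LieSubmodule.Quotient.mk_eq_zero'.2 (hI x)
  intro z hz
  have := LieHom.eqOn_lieSpan hgen (chi_lieSpan_eq_top K g ▸ LieSubalgebra.mem_top z)
  rw [LieHom.comp_apply, LieHom.comp_apply, (LieHom.mem_ker).1 hz, map_zero, map_zero] at this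
  exact LieSubmodule.Quotient.mk_eq_zero'.1 this

end Chi

/-- The ideal `L(g)` of `χ(g)` generated by the elements `x - xᵠ` is in fact
generated as a Lie subalgebra by the set `{x - xᵠ : x ∈ g}`: the Lie subalgebra of `χ(g)`
generated by this set coincides with the kernel of the homomorphism `α : χ(g) → g`
determined by `α(x) = α(xᵠ) = x`. -/
theorem chi_L_generated_as_subalgebra
    (K : Type u) [Field K] (hchar : ringChar K ≠ 2)
    (g : Type v) [LieRing g] [LieAlgebra K g]
    (α : chi K g →ₗ⁅K⁆ g)
    (hα : ∀ x : g, α (chiι K g x) = x)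
    (hαψ : ∀ x : g, α (chiψ K g x) = x) :
    ((LieSubalgebra.lieSpan K (chi K g)
        (Set.range fun x : g => chiι K g x - chiψ K g x)) : Set (chi K g))
        = {z : chi K g | α z = 0} ∧
      (chiL K g : Set (chi K g)) = {z : chi K g | α z = 0} := by
  obtain ⟨I, hI⟩ := exists_lieIdeal_coe_eq_lieSpan_chiι_sub_chiψ (g := g) (Ring.two_ne_zero hchar)
  set S := LieSubalgebra.lieSpan K (chi K g) (Set.range fun x : g => chiι K g x - chiψ K g x)
  have hker_S : {z | α z = 0} ⊆ (S : Set (chi K g)) := by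
    rw [← hI, LieIdeal.coe_toLieSubalgebra]
    refine ker_le_of_chiι_sub_chiψ_mem α hα hαψ fun x ↦ ?_
    rw [← LieIdeal.mem_toLieSubalgebra, hI]
    exact LieSubalgebra.subset_lieSpan ⟨x, rfl⟩
  have hS_L : (S : Set (chi K g)) ⊆ chiL K g :=
    LieSubalgebra.lieSpan_le (K := (chiL K g : LieSubalgebra K (chi K g))).2
      LieSubmodule.subset_lieSpan
  have hL_ker : (chiL K g : Set (chi K g)) ⊆ {z | α z = 0} := by
    refine (LieSubmodule.lieSpan_le (N := α.ker)).2 ?_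
    rintro _ ⟨x, rfl⟩
    simp [LieHom.mem_ker, hα, hαψ]
  exact ⟨(hS_L.trans hL_ker).antisymm hker_S, hL_ker.antisymm (hker_S.trans hS_L)⟩
end

section
/- Let K be a field with char K ≠ 2 and let 𝔤 be a Lie algebra over K. Then in χ(𝔤) one has [D(𝔤), L(𝔤)] = 0, i.e. every element of the ideal D(𝔤) generated by the brackets [x, y^ψ] commutes with every element of the ideal L(𝔤) generated by the elements x − x^ψ. -/
/- Formalization of a statement from "Weak commutativity for Lie algebras"
   (arXiv:1808.10303). All Lie algebras are over a fixed field `K` with `char K ≠ 2`. -/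

universe u v w

set_option linter.unusedVariables false

section WeakCommutativity

variable (K : Type u) [Field K] (g : Type v) [LieRing g] [LieAlgebra K g]

/-- The ideal `D(g) ⊆ χ(g)`, generated by the brackets `⁅x, yᵠ⁆` for `x, y ∈ g`. -/
noncomputable def chiD : LieIdeal K (chi K g) :=
  LieSubmodule.lieSpan K (chi K g) { z | ∃ x y : g, z = ⁅chiι K g x, chiψ K g y⁆ }

end WeakCommutativity

/-! Write `d(a, b) = ⁅a, bᵠ⁆`. Applying `⁅x, xᵠ⁆ = 0` to `x = a + b` makes `d` antisymmetric, so
also `⁅aᵠ, b⁆ = d(a, b)`. The Jacobi identity writes `⁅d(a, b), cᵠ⁆` as `-⁅d(c, a), bᵠ⁆` plus a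
mixed bracket `d(·, ·)`; applying this around the cycle `(a, b, c)` shows that `2⁅d(a, b), cᵠ⁆` is a
combination of mixed brackets, and by the symmetry `x ↔ xᵠ` the same combination is
`2⁅d(a, b), c⁆`. As `2` is invertible, the linear span of the mixed brackets is stable under the
generators of `χ(g)`, hence equals `D(g)`, and each `c - cᵠ` centralizes it. The centralizer of an
ideal is an ideal, so it contains `L(g)`. -/

section Generation

variable {R L : Type*} [CommRing R] [LieRing L] [LieAlgebra R L]

def Submodule.lieStabilizer (V : Submodule R L) : LieSubalgebra R L where
  carrier := {u | ∀ v ∈ V, ⁅u, v⁆ ∈ V}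
  add_mem' hu hw v hv := by rw [add_lie]; exact add_mem (hu v hv) (hw v hv)
  zero_mem' v _ := by rw [zero_lie]; exact zero_mem V
  smul_mem' c u hu v hv := by rw [smul_lie]; exact V.smul_mem c (hu v hv)
  lie_mem' {u w} hu hw v hv := by rw [lie_lie]; exact sub_mem (hu _ (hw v hv)) (hw _ (hu v hv))

theorem LieSubmodule.toSubmodule_lieSpan_eq_span {X s : Set L}
    (hX : LieSubalgebra.lieSpan R L X = ⊤)
    (hXs : ∀ x ∈ X, ∀ v ∈ s, ⁅x, v⁆ ∈ Submodule.span R s) :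
    (LieSubmodule.lieSpan R L s).toSubmodule = Submodule.span R s := by
  refine le_antisymm ?_ (Submodule.span_le.2 LieSubmodule.subset_lieSpan)
  have hstab : ⊤ ≤ Submodule.lieStabilizer (Submodule.span R s) := by
    rw [← hX, LieSubalgebra.lieSpan_le]
    intro x hx v hv
    exact (Submodule.span_le (p := (Submodule.span R s).comap (LieAlgebra.ad R L x))).2
      (hXs x hx) hv
  let I : LieIdeal R L := { Submodule.span R s with lie_mem := fun hv => hstab trivial _ hv }
  exact (LieSubmodule.lieSpan_le (N := I)).2 Submodule.subset_span

theorem FreeLieAlgebra.lieSpan_range_of_surjective {X : Type*} (f : FreeLieAlgebra R X →ₗ⁅R⁆ L)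
    (hf : Function.Surjective f) :
    LieSubalgebra.lieSpan R L (Set.range (f ∘ FreeLieAlgebra.of R)) = ⊤ := by
  set S := LieSubalgebra.lieSpan R L (Set.range (f ∘ FreeLieAlgebra.of R))
  let F : FreeLieAlgebra R X →ₗ⁅R⁆ S :=
    FreeLieAlgebra.lift R fun x => ⟨f (.of R x), LieSubalgebra.subset_lieSpan ⟨x, rfl⟩⟩
  have hF : S.incl.comp F = f := FreeLieAlgebra.hom_ext fun x => by
    simp only [LieHom.coe_comp, LieSubalgebra.coe_incl, Function.comp_apply,
      FreeLieAlgebra.lift_of_apply, F]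
  refine eq_top_iff.2 fun y _ => ?_
  obtain ⟨z, rfl⟩ := hf y
  rw [← hF]
  exact (F z).2

end Generation

namespace WeakCommutativity

section WeaklyCommutingPair

variable {K g L : Type*} [Field K] [LieRing g] [LieAlgebra K g] [LieRing L] [LieAlgebra K L]
  (φ ψ : g →ₗ⁅K⁆ L)

def mixedBrackets : Set L := {z | ∃ x y : g, z = ⁅φ x, ψ y⁆}

variable {φ ψ} (hφψ : ∀ x, ⁅φ x, ψ x⁆ = 0)
include hφψ

theorem lie_swap_of_lie_self_eq_zero (a b : g) : ⁅ψ a, φ b⁆ = ⁅φ a, ψ b⁆ := by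
  have h := hφψ (a + b)
  simp only [map_add, add_lie, lie_add, hφψ, zero_add, add_zero] at h
  rw [← lie_skew, eq_neg_of_add_eq_zero_left h, neg_neg]

theorem lie_lie_right_eq (a b c : g) :
    ⁅⁅φ a, ψ b⁆, ψ c⁆ = -⁅⁅φ c, ψ a⁆, ψ b⁆ - ⁅φ a, ψ ⁅c, b⁆⁆ := by
  rw [lie_lie, ← LieHom.map_lie, ← lie_skew c b, map_neg, lie_neg,
    ← lie_swap_of_lie_self_eq_zero hφψ c a, ← lie_skew (ψ c), ← lie_skew (ψ b), neg_lie]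
  abel

theorem two_smul_lie_lie_right (a b c : g) :
    (2 : K) • ⁅⁅φ a, ψ b⁆, ψ c⁆ = ⁅φ c, ψ ⁅b, a⁆⁆ - ⁅φ b, ψ ⁅a, c⁆⁆ - ⁅φ a, ψ ⁅c, b⁆⁆ := by
  have h := lie_lie_right_eq hφψ a b c
  rw [lie_lie_right_eq hφψ c a b, lie_lie_right_eq hφψ b c a] at h
  rw [two_smul]
  nth_rewrite 1 [h]
  abel

theorem two_smul_lie_lie_left (a b c : g) :
    (2 : K) • ⁅⁅φ a, ψ b⁆, φ c⁆ = ⁅φ c, ψ ⁅b, a⁆⁆ - ⁅φ b, ψ ⁅a, c⁆⁆ - ⁅φ a, ψ ⁅c, b⁆⁆ := by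
  have hψφ : ∀ x, ⁅ψ x, φ x⁆ = 0 := fun x => by rw [← lie_skew, hφψ, neg_zero]
  simpa only [lie_swap_of_lie_self_eq_zero hφψ] using two_smul_lie_lie_right hψφ a b c

variable (h2 : (2 : K) ≠ 0)
include h2

theorem lie_lie_sub_eq_zero (a b c : g) : ⁅⁅φ a, ψ b⁆, φ c - ψ c⁆ = 0 := by
  refine smul_right_injective L h2 ?_
  simp only [lie_sub, smul_sub, two_smul_lie_lie_left hφψ, two_smul_lie_lie_right hφψ, sub_self,
    smul_zero]

theorem lie_mem_span_mixedBrackets {x : L} (hx : x ∈ Set.range φ ∪ Set.range ψ) {v : L}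
    (hv : v ∈ mixedBrackets φ ψ) : ⁅x, v⁆ ∈ Submodule.span K (mixedBrackets φ ψ) := by
  obtain ⟨a, b, rfl⟩ := hv
  have hcomb (c : g) : ⁅φ c, ψ ⁅b, a⁆⁆ - ⁅φ b, ψ ⁅a, c⁆⁆ - ⁅φ a, ψ ⁅c, b⁆⁆ ∈
      Submodule.span K (mixedBrackets φ ψ) := by
    refine sub_mem (sub_mem ?_ ?_) ?_ <;> exact Submodule.subset_span ⟨_, _, rfl⟩
  rw [← lie_skew, neg_mem_iff, ← (Submodule.span K (mixedBrackets φ ψ)).smul_mem_iff h2]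
  obtain ⟨c, rfl⟩ | ⟨c, rfl⟩ := hx
  · rw [two_smul_lie_lie_left hφψ]; exact hcomb c
  · rw [two_smul_lie_lie_right hφψ]; exact hcomb c

theorem toSubmodule_lieSpan_mixedBrackets
    (hgen : LieSubalgebra.lieSpan K L (Set.range φ ∪ Set.range ψ) = ⊤) :
    (LieSubmodule.lieSpan K L (mixedBrackets φ ψ)).toSubmodule =
      Submodule.span K (mixedBrackets φ ψ) :=
  LieSubmodule.toSubmodule_lieSpan_eq_span hgen fun _ hx _ hv =>
    lie_mem_span_mixedBrackets hφψ h2 hx hv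

theorem lie_sub_lie_eq_zero_of_mem_span (c : g) {m : L}
    (hm : m ∈ Submodule.span K (mixedBrackets φ ψ)) : ⁅φ c - ψ c, m⁆ = 0 := by
  refine (Submodule.span_le (p := LinearMap.ker (LieAlgebra.ad K L (φ c - ψ c)))).2 ?_ hm
  rintro _ ⟨a, b, rfl⟩
  rw [SetLike.mem_coe, LinearMap.mem_ker, LieAlgebra.ad_apply, ← lie_skew,
    lie_lie_sub_eq_zero hφψ h2, neg_zero]

theorem lie_eq_zero_of_mem_lieSpan
    (hgen : LieSubalgebra.lieSpan K L (Set.range φ ∪ Set.range ψ) = ⊤) :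
    ∀ d ∈ LieSubmodule.lieSpan K L (mixedBrackets φ ψ),
      ∀ l ∈ LieSubmodule.lieSpan K L (Set.range fun x => φ x - ψ x), ⁅d, l⁆ = 0 := by
  set D := LieSubmodule.lieSpan K L (mixedBrackets φ ψ)
  -- `LieModule.ker K L D` is the centralizer of the ideal `D`
  have hL : LieSubmodule.lieSpan K L (Set.range fun x => φ x - ψ x) ≤ LieModule.ker K L D := by
    rw [LieSubmodule.lieSpan_le]
    rintro _ ⟨c, rfl⟩
    refine (LieModule.mem_ker K L D _).2 fun ⟨m, hm⟩ => Subtype.ext ?_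
    have hm' : m ∈ D.toSubmodule := hm
    rw [toSubmodule_lieSpan_mixedBrackets hφψ h2 hgen] at hm'
    exact lie_sub_lie_eq_zero_of_mem_span hφψ h2 c hm'
  intro d hd l hl
  rw [← lie_skew, neg_eq_zero]
  exact congrArg Subtype.val ((LieModule.mem_ker K L D l).1 (hL hl) ⟨d, hd⟩)

end WeaklyCommutingPair

section Chi

variable (K : Type u) [Field K] (g : Type v) [LieRing g] [LieAlgebra K g]

noncomputable def chiMk : FreeLieAlgebra K (g ⊕ g) →ₗ⁅K⁆ chi K g :=
  { (chiIdeal K g).toSubmodule.mkQ with map_lie' := rfl }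

theorem chiMk_surjective : Function.Surjective (chiMk K g) :=
  LieSubmodule.Quotient.surjective_mk' (chiIdeal K g)

variable {K g}

theorem chiMk_eq_zero_of_mem_chiRelators {a : FreeLieAlgebra K (g ⊕ g)}
    (h : a ∈ chiRelators K g) : chiMk K g a = 0 :=
  (Submodule.Quotient.mk_eq_zero _).2 (LieSubmodule.subset_lieSpan h)

theorem chiMk_eq_of_sub_mem_chiRelators {a b : FreeLieAlgebra K (g ⊕ g)}
    (h : a - b ∈ chiRelators K g) : chiMk K g a = chiMk K g b := by
  rw [← sub_eq_zero, ← map_sub]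
  exact chiMk_eq_zero_of_mem_chiRelators h

variable (K g)

noncomputable def chiιHom : g →ₗ⁅K⁆ chi K g where
  toFun := chiι K g
  map_add' x y := chiMk_eq_of_sub_mem_chiRelators (Or.inl ⟨x, y, by rw [sub_sub]⟩)
  map_smul' c x := chiMk_eq_of_sub_mem_chiRelators (Or.inr (Or.inl ⟨c, x, rfl⟩))
  map_lie' {x y} := chiMk_eq_of_sub_mem_chiRelators (Or.inr (Or.inr (Or.inl ⟨x, y, rfl⟩)))

noncomputable def chiψHom : g →ₗ⁅K⁆ chi K g where
  toFun := chiψ K g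
  map_add' x y := chiMk_eq_of_sub_mem_chiRelators (Or.inr (Or.inr (Or.inr (Or.inl
    ⟨x, y, by rw [sub_sub]⟩))))
  map_smul' c x := chiMk_eq_of_sub_mem_chiRelators (Or.inr (Or.inr (Or.inr (Or.inr (Or.inl
    ⟨c, x, rfl⟩)))))
  map_lie' {x y} := chiMk_eq_of_sub_mem_chiRelators (Or.inr (Or.inr (Or.inr (Or.inr (Or.inr
    (Or.inl ⟨x, y, rfl⟩))))))

theorem chiι_lie_chiψ_self (x : g) : ⁅chiιHom K g x, chiψHom K g x⁆ = 0 :=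
  chiMk_eq_zero_of_mem_chiRelators (Or.inr (Or.inr (Or.inr (Or.inr (Or.inr (Or.inr ⟨x, rfl⟩))))))

theorem lieSpan_range_chiι_union_range_chiψ :
    LieSubalgebra.lieSpan K (chi K g) (Set.range (chiιHom K g) ∪ Set.range (chiψHom K g)) = ⊤ := by
  have h : chiMk K g ∘ FreeLieAlgebra.of K = Sum.elim (chiιHom K g) (chiψHom K g) := by
    funext s
    cases s <;> rfl
  rw [← Set.Sum.elim_range, ← h]
  exact FreeLieAlgebra.lieSpan_range_of_surjective _ (chiMk_surjective K g)

theorem chiD_eq_lieSpan_mixedBrackets :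
    chiD K g = LieSubmodule.lieSpan K _ (mixedBrackets (chiιHom K g) (chiψHom K g)) := rfl

theorem chiL_eq_lieSpan :
    chiL K g = LieSubmodule.lieSpan K _ (Set.range fun x => chiιHom K g x - chiψHom K g x) := rfl

end Chi

end WeakCommutativity

/-- In `χ(g)` one has `⁅D(g), L(g)⁆ = 0`: every element of the ideal `D(g)`
generated by the brackets `⁅x, yᵠ⁆` commutes with every element of the ideal `L(g)`
generated by the elements `x - xᵠ`. -/
theorem chi_bracket_D_L_eq_zero
    (K : Type u) [Field K] (hchar : ringChar K ≠ 2)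
    (g : Type v) [LieRing g] [LieAlgebra K g] :
    ∀ d ∈ chiD K g, ∀ l ∈ chiL K g, ⁅d, l⁆ = 0 := by
  rw [WeakCommutativity.chiD_eq_lieSpan_mixedBrackets, WeakCommutativity.chiL_eq_lieSpan]
  exact WeakCommutativity.lie_eq_zero_of_mem_lieSpan (WeakCommutativity.chiι_lie_chiψ_self K g)
    (Ring.two_ne_zero hchar) (WeakCommutativity.lieSpan_range_chiι_union_range_chiψ K g)
end

section
/- Let K be a field with char K ≠ 2 and let 𝔤 be a Lie algebra over K. Let ρ: χ(𝔤) → 𝔤 ⊕ 𝔤 ⊕ 𝔤 be the homomorphism with ρ(x) = (x, x, 0) and ρ(x^ψ) = (0, x, x) for x ∈ 𝔤. Then the image of ρ equals {(x, y, z) ∈ 𝔤 ⊕ 𝔤 ⊕ 𝔤 : x − y + z ∈ [𝔤, 𝔤]}; in particular Im(ρ) is a subdirect sum of 𝔤 ⊕ 𝔤 ⊕ 𝔤 and, for each pair (i, j) with 1 ≤ i < j ≤ 3, the projection of Im(ρ) onto the i-th and j-th coordinates is all of 𝔤 ⊕ 𝔤. -/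
/- Formalization of a statement from "Weak commutativity for Lie algebras"
   (arXiv:1808.10303). All Lie algebras are over a fixed field `K` with `char K ≠ 2`. -/

universe u v w

set_option linter.unusedVariables false

section ProdLie

variable (L : Type*) (M : Type*) [LieRing L] [LieRing M]

/-- The direct sum of two Lie rings, with componentwise bracket. -/
instance prodLieRing : LieRing (L × M) where
  bracket p q := (⁅p.1, q.1⁆, ⁅p.2, q.2⁆)
  add_lie p q r := by refine Prod.ext ?_ ?_ <;> dsimp <;> exact add_lie _ _ _
  lie_add p q r := by refine Prod.ext ?_ ?_ <;> dsimp <;> exact lie_add _ _ _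
  lie_self p := by refine Prod.ext ?_ ?_ <;> dsimp <;> simp
  leibniz_lie p q r := by refine Prod.ext ?_ ?_ <;> dsimp <;> exact leibniz_lie _ _ _

/-- The direct sum of two Lie algebras. -/
instance prodLieAlgebra (K : Type*) [CommRing K] [LieAlgebra K L] [LieAlgebra K M] :
    LieAlgebra K (L × M) where
  lie_smul t p q := by refine Prod.ext ?_ ?_ <;> exact lie_smul _ _ _

end ProdLie

/-!
The triples `(x, y, z)` with `x - y + z ∈ [g, g]` form a Lie subalgebra of `g × g × g`, since a
bracket has all its coordinates in `[g, g]`; it contains the images `(x, x, 0)` and `(0, x, x)` of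
the generators of `χ(g)`, hence the image of `ρ`. Conversely the image contains every
`(a, a + c, c)`, and `ρ ⁅x, yᵠ⁆ = ⁅(x, x, 0), (0, y, y)⁆ = (0, ⁅x, y⁆, 0)`, so it also contains
`(0, d, 0)` for every `d ∈ [g, g]`; every triple of the subalgebra is a sum of two such.
-/

theorem FreeLieAlgebra.range_le_of_forall_of_mem {R X L : Type*} [CommRing R] [LieRing L]
    [LieAlgebra R L] {F : FreeLieAlgebra R X →ₗ⁅R⁆ L} {S : LieSubalgebra R L}
    (h : ∀ x, F (of R x) ∈ S) : F.range ≤ S := by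
  have hF : F = S.incl.comp (lift R fun x => ⟨F (of R x), h x⟩) :=
    hom_ext fun x => by simp
  rintro _ ⟨w, rfl⟩
  rw [hF]
  exact Subtype.property _

theorem LieAlgebra.lie_mem_derivedSeries_one {R L : Type*} [CommRing R] [LieRing L]
    [LieAlgebra R L] (x y : L) : ⁅x, y⁆ ∈ derivedSeries R L 1 := by
  rw [derivedSeries_def, derivedSeriesOfIdeal_succ, derivedSeriesOfIdeal_zero]
  exact LieSubmodule.lie_mem_lie (LieSubmodule.mem_top x) (LieSubmodule.mem_top y)

section ChiImage

variable {K : Type u} [Field K] {g : Type v} [LieRing g] [LieAlgebra K g]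

variable (K g) in
def altSumDerivedSubalgebra : LieSubalgebra K (g × g × g) where
  carrier := {p | p.1 - p.2.1 + p.2.2 ∈ LieAlgebra.derivedSeries K g 1}
  add_mem' {p q} hp hq := by
    have h : (p + q).1 - (p + q).2.1 + (p + q).2.2
        = (p.1 - p.2.1 + p.2.2) + (q.1 - q.2.1 + q.2.2) := by
      simp only [Prod.fst_add, Prod.snd_add]
      abel
    rw [Set.mem_ofPred_eq, h]
    exact add_mem hp hq
  zero_mem' := by simp
  smul_mem' c p hp := by
    have h : (c • p).1 - (c • p).2.1 + (c • p).2.2 = c • (p.1 - p.2.1 + p.2.2) := by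
      simp only [Prod.smul_fst, Prod.smul_snd, smul_add, smul_sub]
    rw [Set.mem_ofPred_eq, h]
    exact SMulMemClass.smul_mem c hp
  lie_mem' _ _ :=
    add_mem (sub_mem (LieAlgebra.lie_mem_derivedSeries_one _ _)
      (LieAlgebra.lie_mem_derivedSeries_one _ _)) (LieAlgebra.lie_mem_derivedSeries_one _ _)

variable (K g) in
noncomputable def chiMk : FreeLieAlgebra K (g ⊕ g) →ₗ⁅K⁆ chi K g :=
  { (LieSubmodule.Quotient.mk' (chiIdeal K g)).toLinearMap with
    map_lie' := fun {x y} => (LieSubmodule.Quotient.mk_bracket (I := chiIdeal K g) x y).symm }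

theorem chi_range_le {L : Type w} [LieRing L] [LieAlgebra K L] {f : chi K g →ₗ⁅K⁆ L}
    {S : LieSubalgebra K L} (hι : ∀ x, f (chiι K g x) ∈ S) (hψ : ∀ x, f (chiψ K g x) ∈ S) :
    f.range ≤ S := by
  have hfree : (f.comp (chiMk K g)).range ≤ S :=
    FreeLieAlgebra.range_le_of_forall_of_mem fun
      | .inl x => hι x
      | .inr x => hψ x
  rintro _ ⟨z, rfl⟩
  obtain ⟨w, rfl⟩ := LieSubmodule.Quotient.surjective_mk' (chiIdeal K g) z
  exact hfree ⟨w, rfl⟩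

variable (ρ : chi K g →ₗ⁅K⁆ g × g × g)
  (hρι : ∀ x : g, ρ (chiι K g x) = (x, x, 0)) (hρψ : ∀ x : g, ρ (chiψ K g x) = (0, x, x))
include hρι hρψ

theorem rho_chiι_add_chiψ (a c : g) : ρ (chiι K g a + chiψ K g c) = (a, a + c, c) := by
  rw [map_add, hρι, hρψ]
  simp

theorem rho_lie_chiι_chiψ (x y : g) : ρ ⁅chiι K g x, chiψ K g y⁆ = (0, ⁅x, y⁆, 0) := by
  rw [LieHom.map_lie, hρι, hρψ]
  simp

theorem derivedSeries_one_le_middle_range :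
    (LieAlgebra.derivedSeries K g 1 : Submodule K g) ≤
      ρ.range.toSubmodule.comap (LinearMap.inr K g (g × g) ∘ₗ LinearMap.inl K g g) := by
  rw [LieAlgebra.coe_derivedSeries_one_eq, Submodule.span_le]
  rintro _ ⟨x, y, rfl⟩
  exact ⟨⁅chiι K g x, chiψ K g y⁆, rho_lie_chiι_chiψ ρ hρι hρψ x y⟩

theorem rho_range_eq_altSumDerivedSubalgebra : ρ.range = altSumDerivedSubalgebra K g := by
  refine le_antisymm (chi_range_le (fun x => ?_) (fun x => ?_)) (fun p hp => ?_)
  · simp [altSumDerivedSubalgebra, hρι]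
  · simp [altSumDerivedSubalgebra, hρψ]
  · obtain ⟨z, hz⟩ := derivedSeries_one_le_middle_range ρ hρι hρψ (neg_mem hp)
    replace hz : ρ z = (0, -(p.1 - p.2.1 + p.2.2), 0) := hz
    refine (LieHom.mem_range ρ p).mpr ⟨chiι K g p.1 + chiψ K g p.2.2 + z, ?_⟩
    rw [map_add, rho_chiι_add_chiψ ρ hρι hρψ, hz]
    ext <;> simp

end ChiImage

theorem chi_image_rho_subdirect_general
    (K : Type u) [Field K]
    (g : Type v) [LieRing g] [LieAlgebra K g]
    (ρ : chi K g →ₗ⁅K⁆ g × g × g)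
    (hρι : ∀ x : g, ρ (chiι K g x) = (x, x, 0))
    (hρψ : ∀ x : g, ρ (chiψ K g x) = (0, x, x)) :
    (ρ.range : Set (g × g × g)) =
        {p : g × g × g | p.1 - p.2.1 + p.2.2 ∈ LieAlgebra.derivedSeries K g 1} ∧
      (∀ a b : g, ∃ z : chi K g, (ρ z).1 = a ∧ (ρ z).2.1 = b) ∧
      (∀ a b : g, ∃ z : chi K g, (ρ z).1 = a ∧ (ρ z).2.2 = b) ∧
      (∀ a b : g, ∃ z : chi K g, (ρ z).2.1 = a ∧ (ρ z).2.2 = b) := by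
  have hρ := rho_chiι_add_chiψ ρ hρι hρψ
  refine ⟨by rw [rho_range_eq_altSumDerivedSubalgebra ρ hρι hρψ]; rfl, fun a b => ?_,
    fun a b => ?_, fun a b => ?_⟩
  · exact ⟨chiι K g a + chiψ K g (b - a), by rw [hρ]; exact ⟨rfl, add_sub_cancel a b⟩⟩
  · exact ⟨chiι K g a + chiψ K g b, by rw [hρ]; exact ⟨rfl, rfl⟩⟩
  · exact ⟨chiι K g (a - b) + chiψ K g b, by rw [hρ]; exact ⟨sub_add_cancel a b, rfl⟩⟩

/-- The image of `ρ : χ(g) → g ⊕ g ⊕ g` equals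
`{(x, y, z) : x - y + z ∈ [g, g]}`; in particular it is a subdirect sum of `g ⊕ g ⊕ g`
projecting onto any two of the three coordinates. -/
theorem chi_image_rho_subdirect
    (K : Type u) [Field K] (hchar : ringChar K ≠ 2)
    (g : Type v) [LieRing g] [LieAlgebra K g]
    (ρ : chi K g →ₗ⁅K⁆ g × g × g)
    (hρι : ∀ x : g, ρ (chiι K g x) = (x, x, 0))
    (hρψ : ∀ x : g, ρ (chiψ K g x) = (0, x, x)) :
    (ρ.range : Set (g × g × g)) =
        {p : g × g × g | p.1 - p.2.1 + p.2.2 ∈ LieAlgebra.derivedSeries K g 1} ∧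
      (∀ a b : g, ∃ z : chi K g, (ρ z).1 = a ∧ (ρ z).2.1 = b) ∧
      (∀ a b : g, ∃ z : chi K g, (ρ z).1 = a ∧ (ρ z).2.2 = b) ∧
      (∀ a b : g, ∃ z : chi K g, (ρ z).2.1 = a ∧ (ρ z).2.2 = b) :=
  chi_image_rho_subdirect_general K g ρ hρι hρψ
end

section
/- Let K be a field with char K ≠ 2, let 𝔣 be a non-abelian free Lie algebra of finite rank over K, and let S be the Lie subalgebra of 𝔣 ⊕ 𝔣 generated by the elements (x, −x) for x ∈ 𝔣. Then the second Lie algebra homology H₂(S; K) with trivial coefficients is infinite dimensional. -/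
/-!
A 2-cocycle `c` of `S` with trivial coefficients pairs with the Hopf quotient: lifting the
presentation `π : 𝔣 → S` to the central extension of `S` defined by `c`, the central coordinate
is a linear form on `𝔣` that kills `⁅𝔣, ker π⁆` and sends `⁅f, g⁆` to `c (π f) (π g)`. Hence
commuting pairs `(a j, b j)` in `S` together with cocycles `c i` satisfying
`c i (a j) (b j) = δ i j` give linearly independent classes `⁅f j, g j⁆` in `H₂(S)`.

Send the free generators `x, y` to `e 0, e 1` in the model filiform algebra (`⁅e 0, e j⁆ = e (j+1)`)
and let `A, B : S → Filiform` be the two resulting projections. On `S` the `e 0`-coordinates of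
`A` and `B` are opposite, which makes `(u, v) ↦ β (A u) (B v) - β (A v) (B u)` a cocycle for each
of the pairings `β a b = ∑_{i + j = d + 1, i, j ≥ 1} a i * b j`. Pair these with
`a = (⁅x, y⁆, 0)` and `b j = (0, ad(x)^(j+1) y)`, which lie in `S` because `2` is invertible.
-/

universe u w

/-- The Hopf-formula model of the second homology `H₂(𝔣/𝔯; K)` of a Lie algebra presented
as the quotient of a free Lie algebra `𝔣` by an ideal `𝔯`: the subspace
`([𝔣, 𝔣] ⊓ 𝔯)/⁅𝔣, 𝔯⁆` of `𝔣/⁅𝔣, 𝔯⁆`. -/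
noncomputable def hopfH2 (K : Type u) [Field K] {X : Type w}
    (r : LieIdeal K (FreeLieAlgebra K X)) :
    Submodule K (FreeLieAlgebra K X ⧸
      LieSubmodule.toSubmodule (⁅(⊤ : LieIdeal K (FreeLieAlgebra K X)), r⁆ :
        LieIdeal K (FreeLieAlgebra K X))) :=
  Submodule.map
    (LieSubmodule.toSubmodule (⁅(⊤ : LieIdeal K (FreeLieAlgebra K X)), r⁆ :
      LieIdeal K (FreeLieAlgebra K X))).mkQ
    (LieSubmodule.toSubmodule
      ((⁅(⊤ : LieIdeal K (FreeLieAlgebra K X)), (⊤ : LieIdeal K (FreeLieAlgebra K X))⁆ ⊓ r :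
        LieIdeal K (FreeLieAlgebra K X))))


open LieModule.Cohomology LieAlgebra

section CentralExtension

variable {R : Type*} [CommRing R] {L : Type*} [LieRing L] [LieAlgebra R L] {X : Type*}
  {M : Type*} [AddCommGroup M] [Module R M] [LieRingModule L M] [LieModule R L M]
  (c : twoCocycle R L M) (π : FreeLieAlgebra R X →ₗ⁅R⁆ L)

def ofTwoCocycleProj : ofTwoCocycle c →ₗ⁅R⁆ L where
  toFun z := ((ofProd c).symm z).1
  map_add' _ _ := rfl
  map_smul' _ _ := rfl
  map_lie' := rfl

noncomputable def liftToOfTwoCocycle : FreeLieAlgebra R X →ₗ⁅R⁆ ofTwoCocycle c :=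
  FreeLieAlgebra.lift R fun x => ofProd c (π (FreeLieAlgebra.of R x), 0)

lemma ofTwoCocycleProj_comp_liftToOfTwoCocycle :
    (ofTwoCocycleProj c).comp (liftToOfTwoCocycle c π) = π :=
  FreeLieAlgebra.hom_ext fun x => by
    rw [LieHom.comp_apply, liftToOfTwoCocycle, FreeLieAlgebra.lift_of_apply]; rfl

noncomputable def cocycleFunctional : FreeLieAlgebra R X →ₗ[R] M :=
  LinearMap.snd R L M ∘ₗ ((ofProd c).symm.linearEquiv R).toLinearMap ∘ₗ
    (liftToOfTwoCocycle c π).toLinearMap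

variable [LieModule.IsTrivial L M]

lemma cocycleFunctional_lie (f g : FreeLieAlgebra R X) :
    cocycleFunctional c π ⁅f, g⁆ = c.1 (π f) (π g) := by
  have hproj (h) : ((ofProd c).symm (liftToOfTwoCocycle c π h)).1 = π h :=
    LieHom.congr_fun (ofTwoCocycleProj_comp_liftToOfTwoCocycle c π) h
  rw [cocycleFunctional, LinearMap.comp_apply, LinearMap.comp_apply, LieHom.coe_toLinearMap,
    LieHom.map_lie]
  change ((ofProd c).symm ⁅liftToOfTwoCocycle c π f, liftToOfTwoCocycle c π g⁆).2 = _
  rw [bracket_ofTwoCocycle, Equiv.symm_apply_apply, hproj, hproj, trivial_lie_zero L M,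
    trivial_lie_zero L M, add_zero, sub_zero]
  rfl

lemma lie_top_ker_le_ker_cocycleFunctional :
    LieSubmodule.toSubmodule
        (⁅(⊤ : LieIdeal R (FreeLieAlgebra R X)), π.ker⁆ : LieIdeal R (FreeLieAlgebra R X)) ≤
      LinearMap.ker (cocycleFunctional c π) := by
  rw [LieSubmodule.lieIdeal_oper_eq_linear_span, Submodule.span_le]
  rintro _ ⟨f, ⟨g, hg⟩, rfl⟩
  rw [SetLike.mem_coe, LinearMap.mem_ker, cocycleFunctional_lie, (LieHom.mem_ker).1 hg, map_zero]

noncomputable def hopfFunctional :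
    (FreeLieAlgebra R X ⧸ LieSubmodule.toSubmodule
        (⁅(⊤ : LieIdeal R (FreeLieAlgebra R X)), π.ker⁆ : LieIdeal R (FreeLieAlgebra R X))) →ₗ[R]
      M :=
  Submodule.liftQ _ (cocycleFunctional c π) (lie_top_ker_le_ker_cocycleFunctional c π)

lemma hopfFunctional_mkQ_lie (f g : FreeLieAlgebra R X) :
    hopfFunctional c π (Submodule.mkQ _ ⁅f, g⁆) = c.1 (π f) (π g) :=
  cocycleFunctional_lie c π f g

end CentralExtension

section HopfH2

variable {K : Type*} [Field K] {L : Type*} [LieRing L] [LieAlgebra K L] {X : Type*}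
  (π : FreeLieAlgebra K X →ₗ⁅K⁆ L)

lemma mkQ_lie_mem_hopfH2 {f g : FreeLieAlgebra K X} (h : ⁅π f, π g⁆ = 0) :
    Submodule.mkQ _ ⁅f, g⁆ ∈ hopfH2 K π.ker := by
  refine Submodule.mem_map_of_mem ?_
  rw [LieSubmodule.mem_toSubmodule, LieSubmodule.mem_inf, LieHom.mem_ker, LieHom.map_lie]
  exact ⟨LieSubmodule.lie_mem_lie (LieSubmodule.mem_top f) (LieSubmodule.mem_top g), h⟩

theorem hopfH2_not_finiteDimensional_of_dual_cocycles (hπ : Function.Surjective π)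
    {ι : Type*} [Infinite ι] [DecidableEq ι] (c : ι → twoCocycle K L (TrivialLieModule K L K))
    (a b : ι → L) (hab : ∀ j, ⁅a j, b j⁆ = 0)
    (hc : ∀ i j, TrivialLieModule.equiv K L K ((c i).1 (a j) (b j)) = if i = j then 1 else 0) :
    ¬ FiniteDimensional K (hopfH2 K π.ker) := by
  choose f hf using fun j => hπ (a j)
  choose g hg using fun j => hπ (b j)
  let v (j : ι) : hopfH2 K π.ker :=
    ⟨_, mkQ_lie_mem_hopfH2 π (f := f j) (g := g j) (by rw [hf, hg, hab])⟩
  let Φ : hopfH2 K π.ker →ₗ[K] ι → K := LinearMap.pi fun i =>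
    (TrivialLieModule.equiv K L K).toLinearMap ∘ₗ hopfFunctional (c i) π ∘ₗ
      (hopfH2 K π.ker).subtype
  have hΦv : Φ ∘ v = fun j => Pi.single j 1 := by
    ext j i
    simp only [Φ, v, Function.comp_apply, LinearMap.pi_apply, LinearMap.comp_apply,
      Submodule.subtype_apply, LinearEquiv.coe_coe, hopfFunctional_mkQ_lie, hf, hg, hc,
      Pi.single_apply]
  intro hfin
  exact Module.Finite.not_linearIndependent_of_infinite v
    ((hΦv ▸ Pi.linearIndependent_single_one ι K).of_comp Φ)

end HopfH2

section ScalarCocycle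

variable {R : Type*} [CommRing R] {L : Type*} [LieRing L] [LieAlgebra R L]

def twoCocycleOfForm (ω : L →ₗ[R] L →ₗ[R] R) (halt : ∀ x, ω x x = 0)
    (hω : ∀ x y z, ω x ⁅y, z⁆ = ω ⁅x, y⁆ z + ω y ⁅x, z⁆) :
    twoCocycle R L (TrivialLieModule R L R) :=
  ⟨⟨ω.compr₂ (TrivialLieModule.equiv R L R).symm.toLinearMap, fun x =>
      (congrArg (TrivialLieModule.equiv R L R).symm (halt x)).trans (map_zero _)⟩,
    (mem_twoCocycle_iff_of_trivial R L _ _).2 fun x y z =>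
      (congrArg (TrivialLieModule.equiv R L R).symm (hω x y z)).trans (map_add _ _ _)⟩

@[simp] lemma equiv_twoCocycleOfForm_apply (ω : L →ₗ[R] L →ₗ[R] R) (halt : ∀ x, ω x x = 0)
    (hω : ∀ x y z, ω x ⁅y, z⁆ = ω ⁅x, y⁆ z + ω y ⁅x, z⁆) (x y : L) :
    TrivialLieModule.equiv R L R ((twoCocycleOfForm ω halt hω).1 x y) = ω x y :=
  rfl

end ScalarCocycle

/-- The model filiform Lie algebra: `a : Filiform R` stands for the formal sum `∑ a k • e k`, with
`⁅e 0, e j⁆ = e (j + 1)` for `j ≠ 0` and all other brackets of basis vectors zero. -/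
def Filiform (R : Type*) : Type _ := ℕ → R

namespace Filiform

@[ext] lemma ext {R : Type*} {a b : Filiform R} (h : ∀ k, a k = b k) : a = b := funext h

variable {R : Type*} [CommRing R]

instance : AddCommGroup (Filiform R) := inferInstanceAs (AddCommGroup (ℕ → R))
instance : Module R (Filiform R) := inferInstanceAs (Module R (ℕ → R))

@[simp] lemma add_apply (a b : Filiform R) (k : ℕ) : (a + b) k = a k + b k := rfl
@[simp] lemma smul_apply (t : R) (a : Filiform R) (k : ℕ) : (t • a) k = t * a k := rfl
@[simp] lemma zero_apply (k : ℕ) : (0 : Filiform R) k = 0 := rfl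

def bracket (a b : Filiform R) : Filiform R
  | 0 => 0
  | 1 => 0
  | k + 2 => a 0 * b (k + 1) - b 0 * a (k + 1)

instance : LieRing (Filiform R) where
  bracket := bracket
  add_lie a b c := by ext (_ | _ | k) <;> simp only [bracket, add_apply] <;> ring
  lie_add a b c := by ext (_ | _ | k) <;> simp only [bracket, add_apply] <;> ring
  lie_self a := by ext (_ | _ | k) <;> simp only [bracket, zero_apply, sub_self]
  leibniz_lie a b c := by ext (_ | _ | _ | k) <;> simp only [bracket, add_apply] <;> ring

@[simp] lemma lie_apply_zero (a b : Filiform R) : ⁅a, b⁆ 0 = 0 := rfl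
@[simp] lemma lie_apply_one (a b : Filiform R) : ⁅a, b⁆ 1 = 0 := rfl
@[simp] lemma lie_apply_add_two (a b : Filiform R) (k : ℕ) :
    ⁅a, b⁆ (k + 2) = a 0 * b (k + 1) - b 0 * a (k + 1) := rfl

instance : LieAlgebra R (Filiform R) where
  lie_smul t a b := by
    ext (_ | _ | k) <;>
      simp only [zero_add, lie_apply_zero, lie_apply_one, lie_apply_add_two, smul_apply] <;> ring

def coeff (k : ℕ) : Filiform R →ₗ[R] R where
  toFun a := a k
  map_add' _ _ := rfl
  map_smul' _ _ := rfl

@[simp] lemma coeff_apply (k : ℕ) (a : Filiform R) : coeff k a = a k := rfl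

def single (j : ℕ) : Filiform R := Pi.single j (1 : R)

lemma single_apply (j k : ℕ) : (single j : Filiform R) k = if k = j then 1 else 0 :=
  Pi.single_apply j 1 k

lemma lie_single_zero_single {j : ℕ} (hj : j ≠ 0) :
    ⁅(single 0 : Filiform R), (single j : Filiform R)⁆ = single (j + 1) := by
  ext (_ | _ | k) <;> simp [single_apply, hj, hj.symm]

def pairing (d : ℕ) : Filiform R →ₗ[R] Filiform R →ₗ[R] R :=
  LinearMap.mk₂ R (fun a b => ∑ i ∈ Finset.range d, a (i + 1) * b (d - i))
    (fun a a' b => by simp only [add_apply, add_mul, Finset.sum_add_distrib])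
    (fun t a b => by simp only [smul_apply, smul_eq_mul, Finset.mul_sum, mul_assoc])
    (fun a b b' => by simp only [add_apply, mul_add, Finset.sum_add_distrib])
    (fun t a b => by simp only [smul_apply, smul_eq_mul, Finset.mul_sum, mul_left_comm])

lemma pairing_apply (d : ℕ) (a b : Filiform R) :
    pairing d a b = ∑ i ∈ Finset.range d, a (i + 1) * b (d - i) := rfl

lemma pairing_succ_lie_left (e : ℕ) (a b v : Filiform R) :
    pairing (e + 1) ⁅a, b⁆ v = a 0 * pairing e b v - b 0 * pairing e a v := by
  simp only [pairing_apply, Finset.sum_range_succ', lie_apply_add_two, zero_add, lie_apply_one,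
    zero_mul, add_zero, Nat.add_sub_add_right, Finset.mul_sum, ← Finset.sum_sub_distrib]
  exact Finset.sum_congr rfl fun i _ => by ring

lemma pairing_succ_lie_right (e : ℕ) (v a b : Filiform R) :
    pairing (e + 1) v ⁅a, b⁆ = a 0 * pairing e v b - b 0 * pairing e v a := by
  simp only [pairing_apply, Finset.sum_range_succ, Nat.add_sub_cancel_left, lie_apply_one,
    mul_zero, add_zero, Finset.mul_sum, ← Finset.sum_sub_distrib]
  refine Finset.sum_congr rfl fun i hi => ?_
  obtain ⟨k, rfl⟩ := Nat.exists_eq_add_of_lt (Finset.mem_range.1 hi)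
  rw [show i + k + 1 + 1 - i = k + 2 by omega, lie_apply_add_two,
    show i + k + 1 - i = k + 1 by omega]
  ring

lemma pairing_succ_single_one (e : ℕ) (v : Filiform R) :
    pairing (e + 1) (single 1) v = v (e + 1) := by
  simp [pairing_apply, single_apply]

section AntidiagonalCocycle

variable {L : Type*} [LieRing L] [LieAlgebra R L] (A B : L →ₗ⁅R⁆ Filiform R)

def antidiagonalForm (e : ℕ) : L →ₗ[R] L →ₗ[R] R :=
  (pairing (e + 1)).compl₁₂ A.toLinearMap B.toLinearMap -
    ((pairing (e + 1)).compl₁₂ A.toLinearMap B.toLinearMap).flip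

lemma antidiagonalForm_apply (e : ℕ) (x y : L) :
    antidiagonalForm A B e x y = pairing (e + 1) (A x) (B y) - pairing (e + 1) (A y) (B x) :=
  rfl

lemma antidiagonalForm_self (e : ℕ) (x : L) : antidiagonalForm A B e x x = 0 := by
  rw [antidiagonalForm_apply, sub_self]

variable {A B}

/-- `ad (e 0)` is self-adjoint for the pairings up to the shift `e + 1 ↦ e`, and `A x`, `B x` have
opposite `e 0`-coordinates, so the two halves of the form pick up opposite signs. -/
lemma antidiagonalForm_lie (hAB : ∀ x, B x 0 = -A x 0) (e : ℕ) (x y z : L) :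
    antidiagonalForm A B e x ⁅y, z⁆ =
      antidiagonalForm A B e ⁅x, y⁆ z + antidiagonalForm A B e y ⁅x, z⁆ := by
  simp only [antidiagonalForm_apply, LieHom.map_lie, pairing_succ_lie_left, pairing_succ_lie_right,
    hAB]
  ring

def antidiagonalCocycle (hAB : ∀ x, B x 0 = -A x 0) (e : ℕ) :
    twoCocycle R L (TrivialLieModule R L R) :=
  twoCocycleOfForm (antidiagonalForm A B e) (antidiagonalForm_self A B e)
    (antidiagonalForm_lie hAB e)

end AntidiagonalCocycle

variable (R) {X : Type*} [DecidableEq X]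

noncomputable def ofGenerators (x y : X) : FreeLieAlgebra R X →ₗ⁅R⁆ Filiform R :=
  FreeLieAlgebra.lift R fun z => if z = x then single 0 else if z = y then single 1 else 0

variable {R} {x y : X}

lemma ofGenerators_of_left : ofGenerators R x y (.of R x) = single 0 := by
  simp [ofGenerators]

lemma ofGenerators_of_right (hxy : x ≠ y) : ofGenerators R x y (.of R y) = single 1 := by
  simp [ofGenerators, hxy.symm]

lemma ofGenerators_iterate_lie (hxy : x ≠ y) (j : ℕ) :
    ofGenerators R x y ((⁅FreeLieAlgebra.of R x, ·⁆)^[j] (.of R y)) = single (j + 1) := by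
  induction j with
  | zero => exact ofGenerators_of_right hxy
  | succ j ih =>
    rw [Function.iterate_succ_apply', LieHom.map_lie, ih, ofGenerators_of_left,
      lie_single_zero_single j.succ_ne_zero]

end Filiform

section AntidiagonalSpan

variable (K : Type*) (L : Type*) [LieRing L]

abbrev antidiagonalSpan [CommRing K] [LieAlgebra K L] : LieSubalgebra K (L × L) :=
  LieSubalgebra.lieSpan K (L × L) (Set.range fun x : L => ((x, -x) : L × L))

variable {K L}

section CommRing

variable [CommRing K] [LieAlgebra K L]

lemma mk_neg_mem_antidiagonalSpan (x : L) : ((x, -x) : L × L) ∈ antidiagonalSpan K L :=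
  LieSubalgebra.subset_lieSpan ⟨x, rfl⟩

lemma mk_lie_lie_mem_antidiagonalSpan (x y : L) :
    ((⁅x, y⁆, ⁅x, y⁆) : L × L) ∈ antidiagonalSpan K L := by
  have h := (antidiagonalSpan K L).lie_mem (mk_neg_mem_antidiagonalSpan x)
    (mk_neg_mem_antidiagonalSpan y)
  rwa [show (⁅(x, -x), (y, -y)⁆ : L × L) = (⁅x, y⁆, ⁅-x, -y⁆) from rfl, neg_lie, lie_neg,
    neg_neg] at h

lemma map_fst_add_map_snd_eq_zero {V : Type*} [AddCommGroup V] [Module K V] (φ : L →ₗ[K] V)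
    (hφ : ∀ x y : L, φ ⁅x, y⁆ = 0) {p : L × L} (hp : p ∈ antidiagonalSpan K L) :
    φ p.1 + φ p.2 = 0 := by
  induction hp using LieSubalgebra.lieSpan_induction with
  | mem _ h => obtain ⟨x, rfl⟩ := h; simp
  | zero => simp
  | add p q _ _ hp hq =>
    rw [Prod.fst_add, Prod.snd_add, map_add, map_add, add_add_add_comm, hp, hq, add_zero]
  | smul t p _ hp => simp only [Prod.smul_fst, Prod.smul_snd, map_smul, ← smul_add, hp, smul_zero]
  | lie p q _ _ _ _ => exact (congrArg₂ (· + ·) (hφ p.1 q.1) (hφ p.2 q.2)).trans (add_zero 0)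

end CommRing

variable [Field K] [LieAlgebra K L]

lemma mk_lie_zero_mem_antidiagonalSpan (h2 : (2 : K) ≠ 0) (x y : L) :
    ((⁅x, y⁆, 0) : L × L) ∈ antidiagonalSpan K L := by
  have h := (antidiagonalSpan K L).smul_mem (2 : K)⁻¹
    ((antidiagonalSpan K L).add_mem (mk_lie_lie_mem_antidiagonalSpan x y)
      (mk_neg_mem_antidiagonalSpan ⁅x, y⁆))
  rwa [Prod.mk_add_mk, add_neg_cancel, ← two_smul K, Prod.smul_mk, smul_smul,
    inv_mul_cancel₀ h2, one_smul, smul_zero] at h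

lemma zero_mk_lie_mem_antidiagonalSpan (h2 : (2 : K) ≠ 0) (x y : L) :
    ((0, ⁅x, y⁆) : L × L) ∈ antidiagonalSpan K L := by
  have h := (antidiagonalSpan K L).sub_mem (mk_lie_lie_mem_antidiagonalSpan x y)
    (mk_lie_zero_mem_antidiagonalSpan h2 x y)
  rwa [Prod.mk_sub_mk, sub_self, sub_zero] at h

end AntidiagonalSpan

open Filiform in
theorem hopfH2_antidiagonalSpan_not_finiteDimensional {K : Type*} [Field K] (h2 : (2 : K) ≠ 0)
    {X : Type*} {x y : X} (hxy : x ≠ y) {Y : Type*}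
    (π : FreeLieAlgebra K Y →ₗ⁅K⁆ antidiagonalSpan K (FreeLieAlgebra K X))
    (hπ : Function.Surjective π) : ¬ FiniteDimensional K (hopfH2 K π.ker) := by
  classical
  set F := FreeLieAlgebra K X
  set ρ := ofGenerators K x y
  let A := ρ.comp ((LieHom.fst K F F).comp (antidiagonalSpan K F).incl)
  let B := ρ.comp ((LieHom.snd K F F).comp (antidiagonalSpan K F).incl)
  have hAB (p : antidiagonalSpan K F) : B p 0 = -A p 0 :=
    eq_neg_of_add_eq_zero_right <| map_fst_add_map_snd_eq_zero (coeff 0 ∘ₗ ρ.toLinearMap)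
      (fun _ _ => by simp) p.2
  let u : antidiagonalSpan K F :=
    ⟨(⁅.of K x, .of K y⁆, 0), mk_lie_zero_mem_antidiagonalSpan h2 _ _⟩
  let w (j : ℕ) : antidiagonalSpan K F :=
    ⟨(0, ⁅.of K x, (⁅FreeLieAlgebra.of K x, ·⁆)^[j] (.of K y)⁆),
      zero_mk_lie_mem_antidiagonalSpan h2 _ _⟩
  refine hopfH2_not_finiteDimensional_of_dual_cocycles π hπ
    (fun i => antidiagonalCocycle hAB (i + 2)) (fun _ => u) w (fun j => ?_) (fun i j => ?_)
  · exact Subtype.ext (Prod.ext (lie_zero _) (zero_lie _))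
  · have hAu : A u = ⁅(single 0 : Filiform K), single 1⁆ := by
      change ρ ⁅FreeLieAlgebra.of K x, FreeLieAlgebra.of K y⁆ = _
      rw [LieHom.map_lie, ofGenerators_of_left, ofGenerators_of_right hxy]
    have hBw : B (w j) = single (j + 2) := by
      change ρ ⁅FreeLieAlgebra.of K x, (⁅FreeLieAlgebra.of K x, ·⁆)^[j] (.of K y)⁆ = _
      rw [LieHom.map_lie, ofGenerators_of_left, ofGenerators_iterate_lie hxy,
        lie_single_zero_single j.succ_ne_zero]
    have hAw : A (w j) = 0 := map_zero ρ
    have hBu : B u = 0 := map_zero ρ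
    simp only [antidiagonalCocycle, equiv_twoCocycleOfForm_apply, antidiagonalForm_apply, hAu, hBw,
      hAw, hBu, map_zero, sub_zero, pairing_succ_lie_left, pairing_succ_single_one]
    simp [single_apply]

/-- Let `f` be a non-abelian free Lie algebra of finite rank (i.e. of rank
`n ≥ 2`) and let `S ⊆ f ⊕ f` be the Lie subalgebra generated by the elements `(x, -x)`.
Then `H₂(S; K)` (computed by the Hopf formula from any free presentation of `S`) is
infinite dimensional. -/
theorem H2_of_antidiagonal_in_free_not_finiteDimensional
    (K : Type u) [Field K] (hchar : ringChar K ≠ 2) (n : ℕ) (hn : 2 ≤ n) :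
    ∀ (X : Type w)
      (π : FreeLieAlgebra K X →ₗ⁅K⁆
        ↥(LieSubalgebra.lieSpan K (FreeLieAlgebra K (Fin n) × FreeLieAlgebra K (Fin n))
            (Set.range fun x : FreeLieAlgebra K (Fin n) =>
              ((x, -x) : FreeLieAlgebra K (Fin n) × FreeLieAlgebra K (Fin n))))),
      Function.Surjective π → ¬ FiniteDimensional K ↥(hopfH2 K π.ker) :=
  fun _ π hπ => hopfH2_antidiagonalSpan_not_finiteDimensional (Ring.two_ne_zero hchar)
    (x := (⟨0, by omega⟩ : Fin n)) (y := ⟨1, by omega⟩) (by simp [Fin.ext_iff]) π hπ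
end
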